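/- Let K = {v ∈ ℝ^n : A_I v ≤ 0, A_E v = 0} be a polyhedral cone with linear maps A_I : ℝ^n → ℝ^{n_I}, A_E : ℝ^n → ℝ^{n_E}, and let Φ : U → V be a diffeomorphism between neighborhoods U, V of 0 with Φ(0) = 0 and Φ'(0) = id, mapping K ∩ U bijectively onto K ∩ V. Fix a row a_j of A_I and let K_j = {v ∈ K : a_j v = 0}. Then there exist neighborhoods Ũ, Ṽ of 0 such that Φ maps K_j ∩ Ũ bijectively onto K_j ∩ Ṽ. -/

import Mathlib

/-! By symmetry it suffices to show that near 0 the inverse `Ψ` maps no point `y ∈ K \ K_j` into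
`K_j`. Suppose `a_j y < 0` but `a_j (Ψ y) = 0`. Let `L` be the subspace cut out by `A_E` and the
constraints active at `y`; then `y + t w ∈ K` for all `w ∈ L` and small `|t|`, so `a_j ∘ Ψ`, which
is `≤ 0` on `K`, has a local maximum at `y` along `L`, and `a_j ∘ DΨ(y)` vanishes on `L`. Since
`y ∈ L`, `a_j` does not vanish on `L`. There are only finitely many active sets, and for each of
them on which `a_j` does not vanish we may fix a direction `w` with `a_j w ≠ 0`; as `DΨ(y) → id`,
`a_j (DΨ(y) w) ≠ 0` for all these `w` once `y` is close to 0, a contradiction. -/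

open Filter Topology Set

theorem HasFDerivAt.apply_eq_zero_of_eventually_le {E : Type*} [NormedAddCommGroup E]
    [NormedSpace ℝ E] {f : E → ℝ} {f' : E →L[ℝ] ℝ} {x w : E} (hf : HasFDerivAt f f' x)
    (hmax : ∀ᶠ t in 𝓝 (0 : ℝ), f (x + t • w) ≤ f x) : f' w = 0 := by
  have hline : HasDerivAt (fun t : ℝ => x + t • w) w 0 := by
    simpa using ((hasDerivAt_id (0 : ℝ)).smul_const w).const_add x
  have hcomp : HasDerivAt (fun t : ℝ => f (x + t • w)) (f' w) 0 := by
    refine HasFDerivAt.comp_hasDerivAt (f := fun t : ℝ => x + t • w) 0 ?_ hline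
    simpa using hf
  exact IsLocalMax.hasDerivAt_eq_zero (by simpa [IsLocalMax, IsMaxFilter] using hmax) hcomp

theorem exists_mem_nhds_bijOn_of_eventually_mapsTo {X Y : Type*} [TopologicalSpace X]
    [TopologicalSpace Y] {f : X → Y} {g : Y → X} {a : X} {b : Y} {S : Set X} {T : Set Y}
    (hf : Tendsto f (𝓝 a) (𝓝 b)) (hg : Tendsto g (𝓝 b) (𝓝 a))
    (hgf : ∀ᶠ x in 𝓝 a, g (f x) = x) (hfg : ∀ᶠ y in 𝓝 b, f (g y) = y)
    (hST : ∀ᶠ x in 𝓝 a, x ∈ S → f x ∈ T) (hTS : ∀ᶠ y in 𝓝 b, y ∈ T → g y ∈ S) :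
    ∃ Ut ∈ 𝓝 a, ∃ Vt ∈ 𝓝 b, BijOn f (S ∩ Ut) (T ∩ Vt) := by
  set P : X → Prop := fun x => g (f x) = x ∧ (x ∈ S → f x ∈ T)
  set Vt : Set Y := {y | (f (g y) = y ∧ (y ∈ T → g y ∈ S)) ∧ P (g y)}
  have hVt : Vt ∈ 𝓝 b := (hfg.and hTS).and (hg.eventually (hgf.and hST))
  refine ⟨{x | P x ∧ f x ∈ Vt}, (hgf.and hST).and (hf.eventually hVt), Vt, hVt, ?_, ?_, ?_⟩
  · exact fun x ⟨hxS, ⟨_, hxT⟩, hxV⟩ => ⟨hxT hxS, hxV⟩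
  · intro x₁ ⟨_, ⟨hx₁, _⟩, _⟩ x₂ ⟨_, ⟨hx₂, _⟩, _⟩ h
    rw [← hx₁, ← hx₂, h]
  · rintro y ⟨hyT, hyV⟩
    have ⟨⟨hfgy, hyS⟩, hPy⟩ := hyV
    exact ⟨g y, ⟨hyS hyT, hPy, by rwa [hfgy]⟩, hfgy⟩

section PolyhedralCone

variable {E F ι : Type*} [AddCommMonoid E] [Module ℝ E] [AddCommMonoid F] [Module ℝ F]
  (AI : E →ₗ[ℝ] ι → ℝ) (AE : E →ₗ[ℝ] F)

def polyhedralCone : Set E := {v | (∀ i, AI v i ≤ 0) ∧ AE v = 0}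

def coneFace (j : ι) : Set E := {v ∈ polyhedralCone AI AE | AI v j = 0}

def activeSubspace (B : Set ι) : Set E := {w | AE w = 0 ∧ ∀ i ∈ B, AI w i = 0}

variable {AI AE}

theorem eventually_add_smul_mem_polyhedralCone [Finite ι] {q w : E}
    (hq : q ∈ polyhedralCone AI AE) (hw : w ∈ activeSubspace AI AE {i | AI q i = 0}) :
    ∀ᶠ t in 𝓝 (0 : ℝ), q + t • w ∈ polyhedralCone AI AE := by
  refine (eventually_all.2 fun i => ?_).mono fun t ht => ⟨ht, by simp [hq.2, hw.1]⟩
  simp only [map_add, map_smul, Pi.add_apply, Pi.smul_apply, smul_eq_mul]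
  rcases (hq.1 i).lt_or_eq with hlt | heq
  · have hlim : Tendsto (fun t : ℝ => AI q i + t * AI w i) (𝓝 0) (𝓝 (AI q i)) := by
      simpa using ((tendsto_id (x := 𝓝 (0 : ℝ))).mul_const (AI w i)).const_add (AI q i)
    exact (hlim.eventually (gt_mem_nhds hlt)).mono fun _ => le_of_lt
  · exact .of_forall fun t => by simp [heq, hw.2 i heq]

end PolyhedralCone

section LocalDiffeomorphism

variable {E F ι : Type*} [NormedAddCommGroup E] [NormedSpace ℝ E] [FiniteDimensional ℝ E]
  [AddCommMonoid F] [Module ℝ F] [Finite ι] {AI : E →ₗ[ℝ] ι → ℝ} {AE : E →ₗ[ℝ] F}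

theorem eventually_mem_coneFace_of_map_mem_coneFace {ψ : E → E}
    (hdiff : ∀ᶠ y in 𝓝 0, DifferentiableAt ℝ ψ y)
    (hderiv : Tendsto (fderiv ℝ ψ) (𝓝 0) (𝓝 (ContinuousLinearMap.id ℝ E)))
    (hK : ∀ᶠ y in 𝓝 0, y ∈ polyhedralCone AI AE → ψ y ∈ polyhedralCone AI AE) (j : ι) :
    ∀ᶠ y in 𝓝 0, y ∈ polyhedralCone AI AE → ψ y ∈ coneFace AI AE j →
      y ∈ coneFace AI AE j := by
  set a : E →L[ℝ] ℝ := (LinearMap.proj j ∘ₗ AI).toContinuousLinearMap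
  have hdir : ∀ᶠ y in 𝓝 0, ∀ B : Set ι, (∃ w ∈ activeSubspace AI AE B, a w ≠ 0) →
      ∃ w ∈ activeSubspace AI AE B, a (fderiv ℝ ψ y w) ≠ 0 := by
    refine eventually_all.2 fun B => ?_
    by_cases h : ∃ w ∈ activeSubspace AI AE B, a w ≠ 0
    · obtain ⟨w, hw, haw⟩ := h
      have hlim : Tendsto (fun y => a (fderiv ℝ ψ y w)) (𝓝 0) (𝓝 (a w)) :=
        (a.continuous.tendsto _).comp
          (((ContinuousLinearMap.apply ℝ E w).continuous.tendsto _).comp hderiv)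
      exact (hlim.eventually_ne haw).mono fun y hy _ => ⟨w, hw, hy⟩
    · exact .of_forall fun y h' => absurd h' h
  filter_upwards [hdiff, hdir, eventually_eventually_nhds.2 hK] with y hyd hyB hyK hy hψy
  refine ⟨hy, by_contra fun hyj => ?_⟩
  obtain ⟨w, hw, hne⟩ := hyB {i | AI y i = 0} ⟨y, ⟨hy.2, fun i hi => hi⟩, hyj⟩
  have hline : Tendsto (fun t : ℝ => y + t • w) (𝓝 0) (𝓝 y) := by
    simpa using ((tendsto_id (x := 𝓝 (0 : ℝ))).smul_const w).const_add y
  have hmax : ∀ᶠ t in 𝓝 (0 : ℝ), a (ψ (y + t • w)) ≤ a (ψ y) := by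
    filter_upwards [eventually_add_smul_mem_polyhedralCone hy hw, hline.eventually hyK]
      with t ht hψt
    simpa [a, hψy.2] using (hψt ht).1 j
  exact hne ((a.hasFDerivAt.comp y hyd.hasFDerivAt).apply_eq_zero_of_eventually_le hmax)

theorem eventually_mapsTo_coneFace {φ ψ : E → E} {U V : Set E} (hU : IsOpen U) (hV : IsOpen V)
    (hU0 : 0 ∈ U) (hV0 : 0 ∈ V) (hφ : ContinuousOn φ U) (hφ0 : φ 0 = 0)
    (hψ : ContDiffOn ℝ 1 ψ V) (hψ' : fderiv ℝ ψ 0 = ContinuousLinearMap.id ℝ E)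
    (hφK : MapsTo φ (polyhedralCone AI AE ∩ U) (polyhedralCone AI AE))
    (hψK : MapsTo ψ (polyhedralCone AI AE ∩ V) (polyhedralCone AI AE))
    (hψφ : ∀ x ∈ U, ψ (φ x) = x) (j : ι) :
    ∀ᶠ x in 𝓝 0, x ∈ coneFace AI AE j → φ x ∈ coneFace AI AE j := by
  have hdiff : ∀ᶠ y in 𝓝 0, DifferentiableAt ℝ ψ y :=
    eventually_of_mem (hV.mem_nhds hV0) fun y hy =>
      (hψ.contDiffAt (hV.mem_nhds hy)).differentiableAt one_ne_zero
  have hderiv : Tendsto (fderiv ℝ ψ) (𝓝 0) (𝓝 (ContinuousLinearMap.id ℝ E)) := by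
    simpa only [hψ'] using
      ((hψ.continuousOn_fderiv_of_isOpen hV le_rfl).continuousAt (hV.mem_nhds hV0)).tendsto
  have hψK' : ∀ᶠ y in 𝓝 0, y ∈ polyhedralCone AI AE → ψ y ∈ polyhedralCone AI AE :=
    eventually_of_mem (hV.mem_nhds hV0) fun y hy hyK => hψK ⟨hyK, hy⟩
  have hφ_tendsto : Tendsto φ (𝓝 0) (𝓝 0) := by
    simpa only [hφ0] using (hφ.continuousAt (hU.mem_nhds hU0)).tendsto
  filter_upwards [hφ_tendsto.eventually
      (eventually_mem_coneFace_of_map_mem_coneFace hdiff hderiv hψK' j), hU.mem_nhds hU0]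
    with x hx hxU hxF
  exact hx (hφK ⟨hxF.1, hxU⟩) (by rwa [hψφ x hxU])

end LocalDiffeomorphism

theorem stmt_15_general {n nI nE : ℕ}
    (AI : (EuclideanSpace ℝ (Fin n)) →ₗ[ℝ] (Fin nI → ℝ))
    (AE : (EuclideanSpace ℝ (Fin n)) →ₗ[ℝ] (Fin nE → ℝ))
    (K : Set (EuclideanSpace ℝ (Fin n)))
    (hK : K = {v | (∀ i, AI v i ≤ 0) ∧ AE v = 0})
    (U V : Set (EuclideanSpace ℝ (Fin n))) (hUopen : IsOpen U) (hVopen : IsOpen V)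
    (hU0 : (0 : EuclideanSpace ℝ (Fin n)) ∈ U) (hV0 : (0 : EuclideanSpace ℝ (Fin n)) ∈ V)
    (Φ Ψ : EuclideanSpace ℝ (Fin n) → EuclideanSpace ℝ (Fin n))
    (hΦd : ContDiffOn ℝ 1 Φ U) (hΨd : ContDiffOn ℝ 1 Ψ V)
    (hΨΦ : ∀ x ∈ U, Ψ (Φ x) = x) (hΦΨ : ∀ y ∈ V, Φ (Ψ y) = y)
    (hΦ0 : Φ 0 = 0) (hΦid : fderiv ℝ Φ 0 = ContinuousLinearMap.id ℝ _)
    (hΦK : Set.BijOn Φ (K ∩ U) (K ∩ V))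
    (j : Fin nI) :
    ∃ (Ut Vt : Set (EuclideanSpace ℝ (Fin n))),
      Ut ∈ 𝓝 (0 : EuclideanSpace ℝ (Fin n)) ∧ Vt ∈ 𝓝 (0 : EuclideanSpace ℝ (Fin n)) ∧
      Set.BijOn Φ ({v ∈ K | AI v j = 0} ∩ Ut) ({v ∈ K | AI v j = 0} ∩ Vt) := by
  subst hK
  have hΨ0 : Ψ 0 = 0 := by simpa [hΦ0] using hΨΦ 0 hU0
  have hΨK : MapsTo Ψ (polyhedralCone AI AE ∩ V) (polyhedralCone AI AE) := by
    rintro y hy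
    obtain ⟨x, hx, rfl⟩ := hΦK.surjOn hy
    rw [hΨΦ x hx.2]
    exact hx.1
  have hΨid : fderiv ℝ Ψ 0 = ContinuousLinearMap.id ℝ _ := by
    have hΦ' : HasFDerivAt Φ
        ((ContinuousLinearEquiv.refl ℝ (EuclideanSpace ℝ (Fin n)) : _ →L[ℝ] _)) (Ψ 0) := by
      simpa [hΨ0, ← hΦid] using
        ((hΦd.contDiffAt (hUopen.mem_nhds hU0)).differentiableAt one_ne_zero).hasFDerivAt
    exact (hΦ'.of_local_left_inverse (hΨd.continuousOn.continuousAt (hVopen.mem_nhds hV0))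
      (eventually_of_mem (hVopen.mem_nhds hV0) hΦΨ)).fderiv
  have hΦc : Tendsto Φ (𝓝 0) (𝓝 0) := by
    simpa only [hΦ0] using (hΦd.continuousOn.continuousAt (hUopen.mem_nhds hU0)).tendsto
  have hΨc : Tendsto Ψ (𝓝 0) (𝓝 0) := by
    simpa only [hΨ0] using (hΨd.continuousOn.continuousAt (hVopen.mem_nhds hV0)).tendsto
  obtain ⟨Ut, hUt, Vt, hVt, hbij⟩ := exists_mem_nhds_bijOn_of_eventually_mapsTo hΦc hΨc
    (eventually_of_mem (hUopen.mem_nhds hU0) hΨΦ) (eventually_of_mem (hVopen.mem_nhds hV0) hΦΨ)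
    (eventually_mapsTo_coneFace hUopen hVopen hU0 hV0 hΦd.continuousOn hΦ0 hΨd hΨid
      (hΦK.mapsTo.mono_right inter_subset_left) hΨK hΨΦ j)
    (eventually_mapsTo_coneFace hVopen hUopen hV0 hU0 hΨd.continuousOn hΨ0 hΦd hΦid
      hΨK (hΦK.mapsTo.mono_right inter_subset_left) hΦΨ j)
  exact ⟨Ut, Vt, hUt, hVt, hbij⟩

theorem stmt_15 {n nI nE : ℕ}
    (AI : (EuclideanSpace ℝ (Fin n)) →ₗ[ℝ] (Fin nI → ℝ))
    (AE : (EuclideanSpace ℝ (Fin n)) →ₗ[ℝ] (Fin nE → ℝ))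
    (K : Set (EuclideanSpace ℝ (Fin n)))
    (hK : K = {v | (∀ i, AI v i ≤ 0) ∧ AE v = 0})
    (U V : Set (EuclideanSpace ℝ (Fin n))) (hUopen : IsOpen U) (hVopen : IsOpen V)
    (hU0 : (0 : EuclideanSpace ℝ (Fin n)) ∈ U) (hV0 : (0 : EuclideanSpace ℝ (Fin n)) ∈ V)
    (Φ Ψ : EuclideanSpace ℝ (Fin n) → EuclideanSpace ℝ (Fin n))
    (hΦd : ContDiffOn ℝ 1 Φ U) (hΨd : ContDiffOn ℝ 1 Ψ V)
    (hΦUV : Set.BijOn Φ U V)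
    (hΨΦ : ∀ x ∈ U, Ψ (Φ x) = x) (hΦΨ : ∀ y ∈ V, Φ (Ψ y) = y)
    (hΦ0 : Φ 0 = 0) (hΦid : fderiv ℝ Φ 0 = ContinuousLinearMap.id ℝ _)
    (hΦK : Set.BijOn Φ (K ∩ U) (K ∩ V))
    (j : Fin nI) :
    ∃ (Ut Vt : Set (EuclideanSpace ℝ (Fin n))),
      Ut ∈ 𝓝 (0 : EuclideanSpace ℝ (Fin n)) ∧ Vt ∈ 𝓝 (0 : EuclideanSpace ℝ (Fin n)) ∧
      Set.BijOn Φ ({v ∈ K | AI v j = 0} ∩ Ut) ({v ∈ K | AI v j = 0} ∩ Vt) :=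
  stmt_15_general AI AE K hK U V hUopen hVopen hU0 hV0 Φ Ψ hΦd hΨd hΨΦ hΦΨ hΦ0 hΦid hΦK j
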